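/- arXiv:2602.15542 — 2 statements merged into one kernel-verified Lean document; each statement's English description precedes it below -/
import Mathlib

section
/- If X ⊆ ℝ is a nonempty compact set such that the family B_X of X-intervals with no free endpoint interlaces Q_X, then X is an M-Cantorval. -/
open Set

def gapsOf (Y : Set ℝ) : Set (Set ℝ) :=
  {S | ∃ x ∉ Y, S = connectedComponentIn Yᶜ x}

def intervalsOf (Y : Set ℝ) : Set (Set ℝ) :=
  {S | (∃ x ∈ Y, S = connectedComponentIn Y x) ∧ S.Nontrivial}

def QOf (Y : Set ℝ) : Set (Set ℝ) := gapsOf Y ∪ intervalsOf Y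

def setLT (I J : Set ℝ) : Prop := ∀ x ∈ I, ∀ y ∈ J, x < y

def Interlaces (G B : Set (Set ℝ)) : Prop :=
  ∀ I ∈ B, ∀ J ∈ B, setLT I J → ∃ K ∈ G, setLT I K ∧ setLT K J

def IsTame (A : Set ℝ) : Prop :=
  ∀ Y : Set ℝ, Nonempty (↥A ≃ₜ ↥Y) → ∃ f : ℝ ≃ₜ ℝ, f '' A = Y

def RegularlyClosedIn (X : Set ℝ) : Prop :=
  IsClosed X ∧ X ⊆ closure (⋃₀ intervalsOf X)

def trivCompOf (X : Set ℝ) : Set ℝ := {x ∈ X | connectedComponentIn X x = {x}}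

def BOf (X : Set ℝ) : Set (Set ℝ) :=
  {I ∈ intervalsOf X | ∀ e, (IsLeast I e ∨ IsGreatest I e) → e ∈ closure (X \ I)}

def MCantorval (X : Set ℝ) : Prop :=
  X.Nonempty ∧ Bornology.IsBounded X ∧ RegularlyClosedIn X ∧
  ∀ I ∈ intervalsOf X, ∀ e, (IsLeast I e ∨ IsGreatest I e) →
    e ∈ closure (trivCompOf X \ {e})

/-- If a preconnected set avoids `p` and contains a point above `p`,
then it lies entirely above `p`. -/
lemma confine_gt {S : Set ℝ} (hS : IsPreconnected S) {p t : ℝ} (hp : p ∉ S)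
    (ht : t ∈ S) (hpt : p < t) : ∀ s ∈ S, p < s := by
  intro s hs
  by_contra hle
  push_neg at hle
  exact hp (hS.ordConnected.out hs ht ⟨hle, hpt.le⟩)

/-- If a preconnected set avoids `p` and contains a point below `p`,
then it lies entirely below `p`. -/
lemma confine_lt {S : Set ℝ} (hS : IsPreconnected S) {p t : ℝ} (hp : p ∉ S)
    (ht : t ∈ S) (hpt : t < p) : ∀ s ∈ S, s < p := by
  intro s hs
  by_contra hle
  push_neg at hle
  exact hp (hS.ordConnected.out ht hs ⟨hpt.le, hle⟩)

/-- The supremum of a bounded-above gap of `X` is a trivial (singleton) component of `X`. -/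
lemma gap_sSup_triv (X : Set ℝ) (hXc : IsClosed X)
    (h : Interlaces (BOf X) (QOf X)) {t : ℝ} (ht : t ∉ X)
    (hbdd : BddAbove (connectedComponentIn Xᶜ t)) :
    sSup (connectedComponentIn Xᶜ t) ∈ trivCompOf X := by
  set G := connectedComponentIn Xᶜ t with hGdef
  have htG : t ∈ G := mem_connectedComponentIn ht
  have hGsub : G ⊆ Xᶜ := connectedComponentIn_subset _ _
  have hGne : G.Nonempty := ⟨t, htG⟩
  have hGpre : IsPreconnected G := isPreconnected_connectedComponentIn
  set q := sSup G with hq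
  have hqX : q ∈ X := by
    by_contra hqX
    obtain ⟨δ, hδ, hball⟩ := Metric.isOpen_iff.1 hXc.isOpen_compl q hqX
    obtain ⟨g, hgG, hgq⟩ := exists_lt_of_lt_csSup hGne (by linarith : q - δ < q)
    have hgle : g ≤ q := le_csSup hbdd hgG
    have hU : IsPreconnected (G ∪ Ioo (q - δ) (q + δ)) :=
      IsPreconnected.union g hgG ⟨hgq, by linarith⟩ hGpre isPreconnected_Ioo
    have hsub : G ∪ Ioo (q - δ) (q + δ) ⊆ Xᶜ := by
      rintro z (hz | hz)
      · exact hGsub hz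
      · apply hball
        rw [mem_Ioo] at hz
        rw [Metric.mem_ball, Real.dist_eq, abs_lt]
        constructor <;> linarith
    have hUG : G ∪ Ioo (q - δ) (q + δ) ⊆ G :=
      hU.subset_connectedComponentIn (Or.inl htG) hsub
    have hmem : q + δ / 2 ∈ G := hUG (Or.inr ⟨by linarith, by linarith⟩)
    have := le_csSup hbdd hmem
    linarith
  refine ⟨hqX, ?_⟩
  set C := connectedComponentIn X q with hC
  have hqC : q ∈ C := mem_connectedComponentIn hqX
  have hCsub : C ⊆ X := connectedComponentIn_subset _ _
  have hCpre : IsPreconnected C := isPreconnected_connectedComponentIn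
  have hClower : ∀ c ∈ C, q ≤ c := by
    intro c hc
    by_contra hlt
    push_neg at hlt
    obtain ⟨g, hgG, hgc⟩ := exists_lt_of_lt_csSup hGne hlt
    have hgq : g ≤ q := le_csSup hbdd hgG
    exact hGsub hgG (hCsub (hCpre.ordConnected.out hc hqC ⟨hgc.le, hgq⟩))
  by_cases hnt : C.Nontrivial
  · exfalso
    have hCQ : C ∈ QOf X := mem_union_right _ ⟨⟨q, hqX, hC⟩, hnt⟩
    have hGQ : G ∈ QOf X := mem_union_left _ ⟨t, ht, hGdef⟩
    have hlt : setLT G C := by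
      intro g hg c hc
      have h1 : g ≤ q := le_csSup hbdd hg
      have h2 : g ≠ q := fun e => (hGsub hg) (e ▸ hqX)
      exact lt_of_lt_of_le (lt_of_le_of_ne h1 h2) (hClower c hc)
    obtain ⟨K, hK, hGK, hKC⟩ := h G hGQ C hCQ hlt
    obtain ⟨k, hk⟩ := hK.1.2.nonempty
    have h1 : q ≤ k := csSup_le hGne fun g hg => (hGK g hg k hk).le
    have h2 : k < q := hKC k hk q hqC
    linarith
  · rw [not_nontrivial_iff] at hnt
    exact hnt.eq_singleton_of_mem hqC

/-- The infimum of a bounded-below gap of `X` is a trivial (singleton) component of `X`. -/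
lemma gap_sInf_triv (X : Set ℝ) (hXc : IsClosed X)
    (h : Interlaces (BOf X) (QOf X)) {t : ℝ} (ht : t ∉ X)
    (hbdd : BddBelow (connectedComponentIn Xᶜ t)) :
    sInf (connectedComponentIn Xᶜ t) ∈ trivCompOf X := by
  set G := connectedComponentIn Xᶜ t with hGdef
  have htG : t ∈ G := mem_connectedComponentIn ht
  have hGsub : G ⊆ Xᶜ := connectedComponentIn_subset _ _
  have hGne : G.Nonempty := ⟨t, htG⟩
  have hGpre : IsPreconnected G := isPreconnected_connectedComponentIn
  set q := sInf G with hq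
  have hqX : q ∈ X := by
    by_contra hqX
    obtain ⟨δ, hδ, hball⟩ := Metric.isOpen_iff.1 hXc.isOpen_compl q hqX
    obtain ⟨g, hgG, hgq⟩ := exists_lt_of_csInf_lt hGne (by linarith : q < q + δ)
    have hgle : q ≤ g := csInf_le hbdd hgG
    have hU : IsPreconnected (G ∪ Ioo (q - δ) (q + δ)) :=
      IsPreconnected.union g hgG ⟨by linarith, hgq⟩ hGpre isPreconnected_Ioo
    have hsub : G ∪ Ioo (q - δ) (q + δ) ⊆ Xᶜ := by
      rintro z (hz | hz)
      · exact hGsub hz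
      · apply hball
        rw [mem_Ioo] at hz
        rw [Metric.mem_ball, Real.dist_eq, abs_lt]
        constructor <;> linarith
    have hUG : G ∪ Ioo (q - δ) (q + δ) ⊆ G :=
      hU.subset_connectedComponentIn (Or.inl htG) hsub
    have hmem : q - δ / 2 ∈ G := hUG (Or.inr ⟨by linarith, by linarith⟩)
    have := csInf_le hbdd hmem
    linarith
  refine ⟨hqX, ?_⟩
  set C := connectedComponentIn X q with hC
  have hqC : q ∈ C := mem_connectedComponentIn hqX
  have hCsub : C ⊆ X := connectedComponentIn_subset _ _
  have hCpre : IsPreconnected C := isPreconnected_connectedComponentIn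
  have hCupper : ∀ c ∈ C, c ≤ q := by
    intro c hc
    by_contra hlt
    push_neg at hlt
    obtain ⟨g, hgG, hgc⟩ := exists_lt_of_csInf_lt hGne hlt
    have hgq : q ≤ g := csInf_le hbdd hgG
    exact hGsub hgG (hCsub (hCpre.ordConnected.out hqC hc ⟨hgq, hgc.le⟩))
  by_cases hnt : C.Nontrivial
  · exfalso
    have hCQ : C ∈ QOf X := mem_union_right _ ⟨⟨q, hqX, hC⟩, hnt⟩
    have hGQ : G ∈ QOf X := mem_union_left _ ⟨t, ht, hGdef⟩
    have hlt : setLT C G := by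
      intro c hc g hg
      have h1 : q ≤ g := csInf_le hbdd hg
      have h2 : g ≠ q := fun e => (hGsub hg) (e ▸ hqX)
      exact lt_of_le_of_lt (hCupper c hc) (lt_of_le_of_ne h1 (Ne.symm h2))
    obtain ⟨K, hK, hCK, hKG⟩ := h C hCQ G hGQ hlt
    obtain ⟨k, hk⟩ := hK.1.2.nonempty
    have h1 : k ≤ q := le_csInf hGne fun g hg => (hKG k hk g hg).le
    have h2 : q < k := hCK q hqC k hk
    linarith
  · rw [not_nontrivial_iff] at hnt
    exact hnt.eq_singleton_of_mem hqC

theorem mCantorval_of_B_interlaces (X : Set ℝ) (hX : IsCompact X)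
    (hne : X.Nonempty) (h : Interlaces (BOf X) (QOf X)) :
    MCantorval X := by
  have hXc : IsClosed X := hX.isClosed
  refine ⟨hne, hX.isBounded, ⟨hXc, ?_⟩, ?_⟩
  · -- regular closedness
    intro x hx
    rw [Metric.mem_closure_iff]
    intro ε hε
    by_cases hnt : (connectedComponentIn X x).Nontrivial
    · exact ⟨x, mem_sUnion.2 ⟨connectedComponentIn X x, ⟨⟨x, hx, rfl⟩, hnt⟩,
        mem_connectedComponentIn hx⟩, by simpa using hε⟩
    · rw [not_nontrivial_iff] at hnt
      have hleft : ∃ t, t ∈ Ioo (x - ε / 2) x ∧ t ∉ X := by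
        by_contra hc
        push_neg at hc
        have hsub : Ioc (x - ε / 2) x ⊆ X := by
          intro z hz
          rcases eq_or_lt_of_le hz.2 with rfl | hlt
          · exact hx
          · exact hc z ⟨hz.1, hlt⟩
        have hcc : Ioc (x - ε / 2) x ⊆ connectedComponentIn X x :=
          isPreconnected_Ioc.subset_connectedComponentIn ⟨by linarith, le_rfl⟩ hsub
        have h1 : x - ε / 4 ∈ connectedComponentIn X x := hcc ⟨by linarith, by linarith⟩
        have h2 : x ∈ connectedComponentIn X x := mem_connectedComponentIn hx
        have := hnt h1 h2
        linarith
      have hright : ∃ t, t ∈ Ioo x (x + ε / 2) ∧ t ∉ X := by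
        by_contra hc
        push_neg at hc
        have hsub : Ico x (x + ε / 2) ⊆ X := by
          intro z hz
          rcases eq_or_lt_of_le hz.1 with rfl | hlt
          · exact hx
          · exact hc z ⟨hlt, hz.2⟩
        have hcc : Ico x (x + ε / 2) ⊆ connectedComponentIn X x :=
          isPreconnected_Ico.subset_connectedComponentIn ⟨le_rfl, by linarith⟩ hsub
        have h1 : x + ε / 4 ∈ connectedComponentIn X x := hcc ⟨by linarith, by linarith⟩
        have h2 : x ∈ connectedComponentIn X x := mem_connectedComponentIn hx
        have := hnt h1 h2
        linarith
      obtain ⟨t₁, ht₁I, ht₁X⟩ := hleft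
      obtain ⟨t₂, ht₂I, ht₂X⟩ := hright
      set G₁ := connectedComponentIn Xᶜ t₁ with hG₁
      set G₂ := connectedComponentIn Xᶜ t₂ with hG₂
      have ht₁G : t₁ ∈ G₁ := mem_connectedComponentIn ht₁X
      have ht₂G : t₂ ∈ G₂ := mem_connectedComponentIn ht₂X
      have hxG₁ : x ∉ G₁ := fun hc => connectedComponentIn_subset Xᶜ t₁ hc hx
      have hxG₂ : x ∉ G₂ := fun hc => connectedComponentIn_subset Xᶜ t₂ hc hx
      have hG₁lt : ∀ g ∈ G₁, g < x :=
        confine_lt isPreconnected_connectedComponentIn hxG₁ ht₁G ht₁I.2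
      have hG₂gt : ∀ g ∈ G₂, x < g :=
        confine_gt isPreconnected_connectedComponentIn hxG₂ ht₂G ht₂I.1
      have hQ1 : G₁ ∈ QOf X := mem_union_left _ ⟨t₁, ht₁X, hG₁⟩
      have hQ2 : G₂ ∈ QOf X := mem_union_left _ ⟨t₂, ht₂X, hG₂⟩
      have hlt : setLT G₁ G₂ := fun a ha b hb => (hG₁lt a ha).trans (hG₂gt b hb)
      obtain ⟨K, hK, h1K, hK2⟩ := h G₁ hQ1 G₂ hQ2 hlt
      obtain ⟨k, hk⟩ := hK.1.2.nonempty
      refine ⟨k, mem_sUnion.2 ⟨K, hK.1, hk⟩, ?_⟩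
      have hkt₁ : t₁ < k := h1K t₁ ht₁G k hk
      have hkt₂ : k < t₂ := hK2 k hk t₂ ht₂G
      rw [mem_Ioo] at ht₁I ht₂I
      rw [Real.dist_eq, abs_lt]
      constructor <;> linarith [ht₁I.1, ht₂I.2]
  · -- endpoints of nontrivial components are limits of singleton components
    rintro I ⟨⟨x₀, hx₀, hIeq⟩, hInt⟩ e hend
    have heI : e ∈ I := by rcases hend with hl | hg; exacts [hl.1, hg.1]
    have hIe : I = connectedComponentIn X e := by
      rw [hIeq]
      exact connectedComponentIn_eq (hIeq ▸ heI)
    have heX : e ∈ X := hIe ▸ heI |> connectedComponentIn_subset X e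
    rw [Metric.mem_closure_iff]
    intro ε hε
    rcases hend with hle | hge
    · -- IsLeast : find a singleton component just left of e
      have hlb : ∀ y ∈ I, e ≤ y := fun y hy => hle.2 hy
      have hy : ∃ y, y ∈ X ∧ e - ε / 2 < y ∧ y < e := by
        by_contra hcon
        push_neg at hcon
        have hIoo : Ioo (e - ε / 2) e ⊆ Xᶜ := by
          intro z hz hzX
          exact absurd hz.2 (not_lt.2 (hcon z hzX hz.1))
        have hmX : e - ε / 4 ∉ X := hIoo ⟨by linarith, by linarith⟩
        set G := connectedComponentIn Xᶜ (e - ε / 4) with hGdef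
        have hmG : e - ε / 4 ∈ G := mem_connectedComponentIn hmX
        have hIooG : Ioo (e - ε / 2) e ⊆ G :=
          isPreconnected_Ioo.subset_connectedComponentIn ⟨by linarith, by linarith⟩ hIoo
        have heG : e ∉ G := fun hc => connectedComponentIn_subset Xᶜ (e - ε / 4) hc heX
        have hGlt : ∀ g ∈ G, g < e :=
          confine_lt isPreconnected_connectedComponentIn heG hmG (by linarith)
        have hQI : I ∈ QOf X := mem_union_right _ ⟨⟨x₀, hx₀, hIeq⟩, hInt⟩
        have hQG : G ∈ QOf X := mem_union_left _ ⟨_, hmX, hGdef⟩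
        have hsl : setLT G I := fun a ha b hb => lt_of_lt_of_le (hGlt a ha) (hlb b hb)
        obtain ⟨K, hK, hGK, hKI⟩ := h G hQG I hQI hsl
        obtain ⟨k, hk⟩ := hK.1.2.nonempty
        have h1 : k < e := hKI k hk e heI
        set η := max ((e + k) / 2) (e - ε / 4) with hη
        have hη1 : e - ε / 2 < η := lt_of_lt_of_le (by linarith) (le_max_right _ _)
        have hη2 : η < e := max_lt (by linarith) (by linarith)
        have h2 : η < k := hGK η (hIooG ⟨hη1, hη2⟩) k hk
        have h3 : (e + k) / 2 ≤ η := le_max_left _ _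
        linarith
      obtain ⟨y, hyX, hyε, hey⟩ := hy
      have hts : ∃ t, t ∈ Ioo y e ∧ t ∉ X := by
        by_contra hcon
        push_neg at hcon
        have hIcc : Icc y e ⊆ X := by
          intro z hz
          rcases eq_or_lt_of_le hz.1 with rfl | h1
          · exact hyX
          rcases eq_or_lt_of_le hz.2 with rfl | h2
          · exact heX
          exact hcon z ⟨h1, h2⟩
        have hcc : Icc y e ⊆ connectedComponentIn X e :=
          isPreconnected_Icc.subset_connectedComponentIn ⟨hey.le, le_rfl⟩ hIcc
        have hyI : y ∈ I := by rw [hIe]; exact hcc ⟨le_rfl, hey.le⟩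
        exact absurd (hlb y hyI) (not_le.2 hey)
      obtain ⟨t, htI, htX⟩ := hts
      set G := connectedComponentIn Xᶜ t with hGdef
      have htG : t ∈ G := mem_connectedComponentIn htX
      have heG : e ∉ G := fun hc => connectedComponentIn_subset Xᶜ t hc heX
      have hyG : y ∉ G := fun hc => connectedComponentIn_subset Xᶜ t hc hyX
      have hGlt : ∀ g ∈ G, g < e :=
        confine_lt isPreconnected_connectedComponentIn heG htG htI.2
      have hGgt : ∀ g ∈ G, y < g :=
        confine_gt isPreconnected_connectedComponentIn hyG htG htI.1
      have hbdd : BddBelow G := ⟨y, fun g hg => (hGgt g hg).le⟩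
      have hqtriv : sInf G ∈ trivCompOf X := gap_sInf_triv X hXc h htX hbdd
      have hq1 : sInf G ≤ t := csInf_le hbdd htG
      have hq2 : y ≤ sInf G := le_csInf ⟨t, htG⟩ fun g hg => (hGgt g hg).le
      refine ⟨sInf G, ⟨hqtriv, ?_⟩, ?_⟩
      · simp only [mem_singleton_iff]
        intro hc
        rw [hc] at hq1
        linarith [htI.2]
      · rw [Real.dist_eq, abs_lt]
        constructor <;> linarith [htI.1, htI.2]
    · -- IsGreatest : find a singleton component just right of e
      have hub : ∀ y ∈ I, y ≤ e := fun y hy => hge.2 hy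
      have hy : ∃ y, y ∈ X ∧ e < y ∧ y < e + ε / 2 := by
        by_contra hcon
        push_neg at hcon
        have hIoo : Ioo e (e + ε / 2) ⊆ Xᶜ := by
          intro z hz hzX
          exact absurd hz.2 (not_lt.2 (hcon z hzX hz.1))
        have hmX : e + ε / 4 ∉ X := hIoo ⟨by linarith, by linarith⟩
        set G := connectedComponentIn Xᶜ (e + ε / 4) with hGdef
        have hmG : e + ε / 4 ∈ G := mem_connectedComponentIn hmX
        have hIooG : Ioo e (e + ε / 2) ⊆ G :=
          isPreconnected_Ioo.subset_connectedComponentIn ⟨by linarith, by linarith⟩ hIoo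
        have heG : e ∉ G := fun hc => connectedComponentIn_subset Xᶜ (e + ε / 4) hc heX
        have hGgt : ∀ g ∈ G, e < g :=
          confine_gt isPreconnected_connectedComponentIn heG hmG (by linarith)
        have hQI : I ∈ QOf X := mem_union_right _ ⟨⟨x₀, hx₀, hIeq⟩, hInt⟩
        have hQG : G ∈ QOf X := mem_union_left _ ⟨_, hmX, hGdef⟩
        have hsl : setLT I G := fun a ha b hb => lt_of_le_of_lt (hub a ha) (hGgt b hb)
        obtain ⟨K, hK, hIK, hKG⟩ := h I hQI G hQG hsl
        obtain ⟨k, hk⟩ := hK.1.2.nonempty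
        have h1 : e < k := hIK e heI k hk
        set η := min ((e + k) / 2) (e + ε / 4) with hη
        have hη1 : e < η := lt_min (by linarith) (by linarith)
        have hη2 : η < e + ε / 2 := lt_of_le_of_lt (min_le_right _ _) (by linarith)
        have h2 : k < η := hKG k hk η (hIooG ⟨hη1, hη2⟩)
        have h3 : η ≤ (e + k) / 2 := min_le_left _ _
        linarith
      obtain ⟨y, hyX, hey, hyε⟩ := hy
      have hts : ∃ t, t ∈ Ioo e y ∧ t ∉ X := by
        by_contra hcon
        push_neg at hcon
        have hIcc : Icc e y ⊆ X := by
          intro z hz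
          rcases eq_or_lt_of_le hz.1 with rfl | h1
          · exact heX
          rcases eq_or_lt_of_le hz.2 with rfl | h2
          · exact hyX
          exact hcon z ⟨h1, h2⟩
        have hcc : Icc e y ⊆ connectedComponentIn X e :=
          isPreconnected_Icc.subset_connectedComponentIn ⟨le_rfl, hey.le⟩ hIcc
        have hyI : y ∈ I := by rw [hIe]; exact hcc ⟨hey.le, le_rfl⟩
        exact absurd (hub y hyI) (not_le.2 hey)
      obtain ⟨t, htI, htX⟩ := hts
      set G := connectedComponentIn Xᶜ t with hGdef
      have htG : t ∈ G := mem_connectedComponentIn htX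
      have heG : e ∉ G := fun hc => connectedComponentIn_subset Xᶜ t hc heX
      have hyG : y ∉ G := fun hc => connectedComponentIn_subset Xᶜ t hc hyX
      have hGgt : ∀ g ∈ G, e < g :=
        confine_gt isPreconnected_connectedComponentIn heG htG htI.1
      have hGlt : ∀ g ∈ G, g < y :=
        confine_lt isPreconnected_connectedComponentIn hyG htG htI.2
      have hbdd : BddAbove G := ⟨y, fun g hg => (hGlt g hg).le⟩
      have hqtriv : sSup G ∈ trivCompOf X := gap_sSup_triv X hXc h htX hbdd
      have hq1 : t ≤ sSup G := le_csSup hbdd htG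
      have hq2 : sSup G ≤ y := csSup_le ⟨t, htG⟩ fun g hg => (hGlt g hg).le
      refine ⟨sSup G, ⟨hqtriv, ?_⟩, ?_⟩
      · simp only [mem_singleton_iff]
        intro hc
        rw [hc] at hq1
        linarith [htI.1]
      · rw [Real.dist_eq, abs_lt]
        constructor <;> linarith [htI.1, htI.2]
end

section
/- Any two M-Cantorvals in ℝ are homeomorphic via an increasing homeomorphism of ℝ; in particular every M-Cantorval is a tame set in ℝ. Likewise, every copy of the Cantor set in ℝ is a tame set in ℝ. -/
/-!
For a compact set `X ⊆ ℝ`, the gaps (components of `Xᶜ`) and the nondegenerate components of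
`X` are disjoint intervals with nonempty interior; they form a countable family, linearly ordered
from left to right, with a first and a last gap. If every end point of a component of `X` is a
limit of points of `X` outside that component, no two members of the family are adjacent and the
gaps are dense in this order; when `X` is moreover regularly closed (an M-Cantorval) the intervals
are dense too, while a Cantor set has only gaps. A back-and-forth argument that sends gaps to gaps
gives an order isomorphism between the families of two such sets, and gluing affine maps between
the interiors of corresponding members, then extending by density, gives an increasing
homeomorphism of `ℝ` carrying one set onto the other. Tameness follows because these hypotheses
are preserved by homeomorphisms between the sets themselves.
-/

open Set

open Filter Topology

theorem setLT_of_mem_of_lt {S T : Set ℝ} (hS : S.OrdConnected) (hT : T.OrdConnected)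
    (hST : Disjoint S T) {s t : ℝ} (hs : s ∈ S) (ht : t ∈ T) (hst : s < t) : setLT S T := by
  intro x hx y hy
  by_contra! hyx
  rcases le_or_gt s y with hsy | hys
  · exact hST.ne_of_mem (hS.out hs hx ⟨hsy, hyx⟩) hy rfl
  · exact hST.ne_of_mem hs (hT.out hy ht ⟨hys.le, hst.le⟩) rfl

theorem Set.OrdConnected.exists_Ioo_csSup_subset {S : Set ℝ} (hS : S.OrdConnected)
    (hnt : S.Nontrivial) (hbdd : BddAbove S) : ∃ a < sSup S, Ioo a (sSup S) ⊆ S := by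
  obtain ⟨a, ha, b, hb, hab⟩ := hnt.exists_lt
  refine ⟨a, hab.trans_le (le_csSup hbdd hb), fun x hx => ?_⟩
  obtain ⟨s, hs, hxs⟩ := exists_lt_of_lt_csSup ⟨a, ha⟩ hx.2
  exact hS.out ha hs ⟨hx.1.le, hxs.le⟩

theorem Set.OrdConnected.exists_Ioo_csInf_subset {S : Set ℝ} (hS : S.OrdConnected)
    (hnt : S.Nontrivial) (hbdd : BddBelow S) : ∃ b > sInf S, Ioo (sInf S) b ⊆ S := by
  obtain ⟨a, ha, b, hb, hab⟩ := hnt.exists_lt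
  refine ⟨b, (csInf_le hbdd ha).trans_lt hab, fun x hx => ?_⟩
  obtain ⟨s, hs, hsx⟩ := exists_lt_of_csInf_lt ⟨b, hb⟩ hx.1
  exact hS.out hs hb ⟨hsx.le, hx.2.le⟩

theorem Set.OrdConnected.interior_eq_Ioo {S : Set ℝ} (hS : S.OrdConnected) (hb : BddBelow S)
    (ha : BddAbove S) : interior S = Ioo (sInf S) (sSup S) := by
  refine ((interior_mono (subset_Icc_csInf_csSup hb ha)).trans interior_Icc.subset).antisymm ?_
  rcases S.eq_empty_or_nonempty with rfl | hne
  · simp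
  exact interior_maximal (IsConnected.Ioo_csInf_csSup_subset ⟨hne, hS.isPreconnected⟩ hb ha)
    isOpen_Ioo

theorem Set.OrdConnected.interior_nonempty_of_nontrivial {S : Set ℝ} (hS : S.OrdConnected)
    (hnt : S.Nontrivial) : (interior S).Nonempty := by
  obtain ⟨a, ha, b, hb, hab⟩ := hnt.exists_lt
  exact (nonempty_Ioo.2 hab).mono
    (interior_maximal (Ioo_subset_Icc_self.trans (hS.out ha hb)) isOpen_Ioo)

theorem csSup_notMem_of_isOpen {S : Set ℝ} (hS : IsOpen S) (hbdd : BddAbove S) :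
    sSup S ∉ S := by
  intro h
  obtain ⟨b, hb, hsub⟩ := exists_Ico_subset_of_mem_nhds (hS.mem_nhds h) (exists_gt _)
  obtain ⟨y, hy, hyb⟩ := exists_between hb
  exact (le_csSup hbdd (hsub ⟨hy.le, hyb⟩)).not_gt hy

theorem isLeast_or_isGreatest_iff_isPreconnected_diff {C : Set ℝ} (hC : C.OrdConnected) {x : ℝ}
    (hx : x ∈ C) : (IsLeast C x ∨ IsGreatest C x) ↔ IsPreconnected (C \ {x}) := by
  constructor
  · rintro (h | h)
    · have : C \ {x} = C ∩ Ioi x := Set.ext fun y => and_congr_right fun hy =>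
        ⟨fun hne => (h.2 hy).lt_of_ne' hne, fun hxy => hxy.ne'⟩
      exact this ▸ (hC.inter ordConnected_Ioi).isPreconnected
    · have : C \ {x} = C ∩ Iio x := Set.ext fun y => and_congr_right fun hy =>
        ⟨fun hne => (h.2 hy).lt_of_ne hne, fun hyx => hyx.ne⟩
      exact this ▸ (hC.inter ordConnected_Iio).isPreconnected
  · intro h
    by_contra! hne
    obtain ⟨a, ha, hax⟩ : ∃ a ∈ C, a < x := by simpa [IsLeast, lowerBounds, hx] using hne.1
    obtain ⟨b, hb, hxb⟩ : ∃ b ∈ C, x < b := by simpa [IsGreatest, upperBounds, hx] using hne.2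
    exact (h.ordConnected.out ⟨ha, hax.ne⟩ ⟨hb, hxb.ne'⟩ ⟨hax.le, hxb.le⟩).2 rfl

theorem mem_connectedComponentIn_of_mem_closure {α : Type*} [TopologicalSpace α] {F : Set α}
    {x y : α} (hy : y ∈ F) (hyC : y ∈ closure (connectedComponentIn F x)) :
    y ∈ connectedComponentIn F x := by
  have hx : x ∈ F := connectedComponentIn_nonempty_iff.1 (closure_nonempty_iff.1 ⟨y, hyC⟩)
  exact (isPreconnected_connectedComponentIn.subset_closure (subset_insert y _)
    (insert_subset hyC subset_closure)).subset_connectedComponentIn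
    (mem_insert_of_mem _ (mem_connectedComponentIn hx))
    (insert_subset hy (connectedComponentIn_subset F x)) (mem_insert y _)

theorem connectedComponentIn_subset_Iio {F : Set ℝ} {x a : ℝ} (hxa : x < a) (ha : a ∉ F) :
    connectedComponentIn F x ⊆ Iio a := fun y hy => by
  have hx : x ∈ F := connectedComponentIn_nonempty_iff.1 ⟨y, hy⟩
  by_contra! hay
  exact ha (connectedComponentIn_subset F x (isPreconnected_connectedComponentIn.ordConnected.out
    (mem_connectedComponentIn hx) hy ⟨hxa.le, not_lt.1 hay⟩))

theorem connectedComponentIn_subset_Ioi {F : Set ℝ} {x a : ℝ} (hax : a < x) (ha : a ∉ F) :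
    connectedComponentIn F x ⊆ Ioi a := fun y hy => by
  have hx : x ∈ F := connectedComponentIn_nonempty_iff.1 ⟨y, hy⟩
  by_contra! hya
  exact ha (connectedComponentIn_subset F x (isPreconnected_connectedComponentIn.ordConnected.out
    hy (mem_connectedComponentIn hx) ⟨not_lt.1 hya, hax.le⟩))

/-! ### Extending a strictly monotone map from a dense set -/

section DenseExtension

variable {α β : Type*} [ConditionallyCompleteLinearOrder α] [TopologicalSpace α] [OrderTopology α]
  [DenselyOrdered α] [NoMinOrder α] [NoMaxOrder α]
  [ConditionallyCompleteLinearOrder β] [TopologicalSpace β] [OrderTopology β]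
  [DenselyOrdered β] [NoMinOrder β] [NoMaxOrder β]

omit [TopologicalSpace α] [OrderTopology α] [DenselyOrdered α] [NoMinOrder α] [NoMaxOrder α] in
theorem StrictMono.surjective_of_dense_subset_range {Φ : α → β} (hΦ : StrictMono Φ) {E : Set β}
    (hE : Dense E) (hEΦ : E ⊆ range Φ) : Function.Surjective Φ := by
  intro y
  obtain ⟨y₁, hy₁⟩ := exists_lt y
  obtain ⟨e₁, he₁, -, hy₁'⟩ := hE.exists_between hy₁
  obtain ⟨x₁, rfl⟩ := hEΦ he₁
  obtain ⟨y₂, hy₂⟩ := exists_gt y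
  obtain ⟨e₂, he₂, hy₂', -⟩ := hE.exists_between hy₂
  obtain ⟨x₂, rfl⟩ := hEΦ he₂
  set A := {x | Φ x < y}
  have hA : A.Nonempty := ⟨x₁, hy₁'⟩
  have hAbdd : BddAbove A := ⟨x₂, fun x hx => (hΦ.lt_iff_lt.1 (hx.trans hy₂')).le⟩
  refine ⟨sSup A, le_antisymm ?_ ?_⟩
  · by_contra! h
    obtain ⟨e, he, hye, heΦ⟩ := hE.exists_between h
    obtain ⟨x, rfl⟩ := hEΦ he
    exact heΦ.not_ge (hΦ.monotone (csSup_le hA fun a ha => (hΦ.lt_iff_lt.1 (ha.trans hye)).le))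
  · by_contra! h
    obtain ⟨e, he, hΦe, hey⟩ := hE.exists_between h
    obtain ⟨x, rfl⟩ := hEΦ he
    exact hΦe.not_ge (hΦ.monotone (le_csSup hAbdd hey))

/-- The extension is `x ↦ sSup (g '' (D ∩ Iio x))`. -/
theorem exists_orderIso_eqOn_of_dense {D : Set α} {E : Set β} {g : α → β} (hD : Dense D)
    (hE : Dense E) (hg : StrictMonoOn g D) (hgD : g '' D = E) : ∃ Φ : α ≃o β, EqOn Φ g D := by
  set Φ : α → β := fun x => sSup (g '' (D ∩ Iio x))
  have hbelow (x : α) : (g '' (D ∩ Iio x)).Nonempty := by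
    obtain ⟨y, hy⟩ := exists_lt x
    obtain ⟨d, hd, -, hdx⟩ := hD.exists_between hy
    exact ⟨g d, d, ⟨hd, hdx⟩, rfl⟩
  have hle {x d : α} (hd : d ∈ D) (hxd : x ≤ d) : Φ x ≤ g d :=
    csSup_le (hbelow x) fun _ ⟨d', ⟨hd', hd'x⟩, h⟩ => h ▸ (hg hd' hd (hd'x.trans_le hxd)).le
  have hge {x d : α} (hd : d ∈ D) (hdx : d < x) : g d ≤ Φ x := by
    obtain ⟨y, hy⟩ := exists_gt x
    obtain ⟨d', hd', hxd', -⟩ := hD.exists_between hy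
    exact le_csSup ⟨g d', fun _ ⟨d'', ⟨hd'', hd''x⟩, h⟩ =>
      h ▸ (hg hd'' hd' (hd''x.trans hxd')).le⟩ ⟨d, ⟨hd, hdx⟩, rfl⟩
  have hmono : StrictMono Φ := fun x y hxy => by
    obtain ⟨d₁, hd₁, hxd₁, hd₁y⟩ := hD.exists_between hxy
    obtain ⟨d₂, hd₂, hd₁d₂, hd₂y⟩ := hD.exists_between hd₁y
    exact (hle hd₁ hxd₁.le).trans_lt ((hg hd₁ hd₂ hd₁d₂).trans_le (hge hd₂ hd₂y))
  have heq : EqOn Φ g D := fun d hd => by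
    refine (hle hd le_rfl).antisymm (not_lt.1 fun h => ?_)
    obtain ⟨e, he, hΦe, heg⟩ := hE.exists_between h
    rw [← hgD] at he
    obtain ⟨d', hd', rfl⟩ := he
    exact hΦe.not_ge (hge hd' ((hg.lt_iff_lt hd' hd).1 heg))
  refine ⟨StrictMono.orderIsoOfSurjective Φ hmono
    (hmono.surjective_of_dense_subset_range hE ?_), heq⟩
  rw [← hgD]
  rintro _ ⟨d, hd, rfl⟩
  exact ⟨d, heq hd⟩

end DenseExtension

theorem exists_orderIso_image_Ioo {a b c d : ℝ} (hab : a < b) (hcd : c < d) :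
    ∃ φ : ℝ ≃o ℝ, φ '' Ioo a b = Ioo c d := by
  have hk : 0 < (d - c) / (b - a) := div_pos (sub_pos.2 hcd) (sub_pos.2 hab)
  refine ⟨((OrderIso.addRight (-a)).trans (OrderIso.mulLeft₀ _ hk)).trans (OrderIso.addRight c),
    ?_⟩
  rw [OrderIso.image_Ioo]
  congr 1
  · simp
  · have : b - a ≠ 0 := (sub_pos.2 hab).ne'
    simp only [OrderIso.trans_apply, OrderIso.addRight_apply, OrderIso.mulLeft₀_apply]
    field_simp
    ring

theorem exists_orderIso_image_Iio (a c : ℝ) : ∃ φ : ℝ ≃o ℝ, φ '' Iio a = Iio c :=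
  ⟨OrderIso.addRight (c - a), by simp⟩

theorem exists_orderIso_image_Ioi (a c : ℝ) : ∃ φ : ℝ ≃o ℝ, φ '' Ioi a = Ioi c :=
  ⟨OrderIso.addRight (c - a), by simp⟩

/-! ### Back and forth for coloured orders -/

section BackAndForth

variable {α β : Type*} [LinearOrder α] [LinearOrder β] {p : α → Prop} {q : β → Prop}

theorem exists_across_of_isBot_of_isTop {f : Finset (α × β)}
    (hf : ∀ x ∈ f, ∀ y ∈ f, cmp x.1 y.1 = cmp x.2 y.2) (hpq : ∀ x ∈ f, p x.1 ↔ q x.2)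
    {a₀ a₁ : α} {b₀ b₁ : β} (ha₀ : IsBot a₀) (ha₁ : IsTop a₁) (h₀ : (a₀, b₀) ∈ f)
    (h₁ : (a₁, b₁) ∈ f) {a : α} (hq : ∀ y₁ y₂ : β, y₁ < y₂ → ∃ y, y₁ < y ∧ y < y₂ ∧ (p a ↔ q y)) :
    ∃ b, (∀ x ∈ f, cmp x.1 a = cmp x.2 b) ∧ (p a ↔ q b) := by
  by_cases h : ∃ b, (a, b) ∈ f
  · obtain ⟨b, hb⟩ := h
    exact ⟨b, fun x hx => hf x hx _ hb, hpq _ hb⟩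
  push Not at h
  set lo := (f.filter (·.1 < a)).image Prod.snd
  set hi := (f.filter (a < ·.1)).image Prod.snd
  have hlo : lo.Nonempty := ⟨b₀, Finset.mem_image_of_mem _ (Finset.mem_filter.2
    ⟨h₀, (ha₀ a).lt_of_ne fun h' => h b₀ (h' ▸ h₀)⟩)⟩
  have hhi : hi.Nonempty := ⟨b₁, Finset.mem_image_of_mem _ (Finset.mem_filter.2
    ⟨h₁, (ha₁ a).lt_of_ne fun h' => h b₁ (h' ▸ h₁)⟩)⟩
  have hlohi : lo.max' hlo < hi.min' hhi := by
    obtain ⟨x, hx, hx'⟩ := Finset.mem_image.1 (lo.max'_mem hlo)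
    obtain ⟨y, hy, hy'⟩ := Finset.mem_image.1 (hi.min'_mem hhi)
    rw [Finset.mem_filter] at hx hy
    rw [← hx', ← hy', ← lt_iff_lt_of_cmp_eq_cmp (hf x hx.1 y hy.1)]
    exact hx.2.trans hy.2
  obtain ⟨b, hlob, hbhi, hab⟩ := hq _ _ hlohi
  refine ⟨b, fun x hx => ?_, hab⟩
  rcases lt_or_gt_of_ne fun h' : x.1 = a => h x.2 (h' ▸ hx) with hxa | hax
  · have hxb : x.2 < b := (lo.le_max' _ (Finset.mem_image_of_mem _
      (Finset.mem_filter.2 ⟨hx, hxa⟩))).trans_lt hlob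
    rw [(cmp_eq_lt_iff _ _).2 hxa, (cmp_eq_lt_iff _ _).2 hxb]
  · have hbx : b < x.2 := hbhi.trans_le (hi.min'_le _ (Finset.mem_image_of_mem _
      (Finset.mem_filter.2 ⟨hx, hax⟩)))
    rw [(cmp_eq_gt_iff _ _).2 hax, (cmp_eq_gt_iff _ _).2 hbx]

variable (p q) in
/-- Finite colour-preserving partial isomorphisms that match the end points from the start, so
that every point still to be matched lies strictly between two matched ones. -/
def ColoredPartialIso (a₀ a₁ : α) (b₀ b₁ : β) : Type _ :=
  {f : Order.PartialIso α β // (a₀, b₀) ∈ f.1 ∧ (a₁, b₁) ∈ f.1 ∧ ∀ x ∈ f.1, p x.1 ↔ q x.2}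

namespace ColoredPartialIso

variable {a₀ a₁ : α} {b₀ b₁ : β}

noncomputable instance : Preorder (ColoredPartialIso p q a₀ a₁ b₀ b₁) := Subtype.preorder _

theorem exists_ge_mem (f : ColoredPartialIso p q a₀ a₁ b₀ b₁) {a : α} {b : β}
    (hab : ∀ x ∈ f.1.1, cmp x.1 a = cmp x.2 b) (hpq : p a ↔ q b) :
    ∃ g : ColoredPartialIso p q a₀ a₁ b₀ b₁, (a, b) ∈ g.1.1 ∧ f ≤ g := by
  refine ⟨⟨⟨insert (a, b) f.1.1, fun x hx y hy => ?_⟩, Finset.mem_insert_of_mem f.2.1,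
    Finset.mem_insert_of_mem f.2.2.1, fun x hx => ?_⟩, Finset.mem_insert_self _ _,
    Finset.subset_insert _ _⟩
  · rw [Finset.mem_insert] at hx hy
    rcases hx with rfl | hx <;> rcases hy with rfl | hy
    · simp only [cmp_self_eq_eq]
    · rw [cmp_eq_cmp_symm, hab y hy, ← cmp_eq_cmp_symm]
    · exact hab x hx
    · exact f.1.2 x hx y hy
  · rcases Finset.mem_insert.1 hx with rfl | hx
    · exact hpq
    · exact f.2.2.2 x hx

def seed (ha : a₀ < a₁) (hb : b₀ < b₁) (h₀ : p a₀ ↔ q b₀) (h₁ : p a₁ ↔ q b₁) :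
    ColoredPartialIso p q a₀ a₁ b₀ b₁ := by
  refine ⟨⟨{(a₀, b₀), (a₁, b₁)}, fun x hx y hy => ?_⟩, by simp, by simp, fun x hx => ?_⟩
  · simp only [Finset.mem_insert, Finset.mem_singleton] at hx hy
    rcases hx with rfl | rfl <;> rcases hy with rfl | rfl <;>
      simp [(cmp_eq_lt_iff _ _).2, (cmp_eq_gt_iff _ _).2, ha, hb]
  · simp only [Finset.mem_insert, Finset.mem_singleton] at hx
    rcases hx with rfl | rfl <;> assumption

def definedAtLeft (ha₀ : IsBot a₀) (ha₁ : IsTop a₁)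
    (hq : ∀ a : α, ∀ y₁ y₂ : β, y₁ < y₂ → ∃ y, y₁ < y ∧ y < y₂ ∧ (p a ↔ q y)) (a : α) :
    Order.Cofinal (ColoredPartialIso p q a₀ a₁ b₀ b₁) where
  carrier := {f | ∃ b, (a, b) ∈ f.1.1}
  isCofinal f := by
    obtain ⟨b, hab, hpq⟩ :=
      exists_across_of_isBot_of_isTop f.1.2 f.2.2.2 ha₀ ha₁ f.2.1 f.2.2.1 (hq a)
    obtain ⟨g, hg, hfg⟩ := f.exists_ge_mem hab hpq
    exact ⟨g, ⟨b, hg⟩, hfg⟩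

def definedAtRight (hb₀ : IsBot b₀) (hb₁ : IsTop b₁)
    (hp : ∀ b : β, ∀ x₁ x₂ : α, x₁ < x₂ → ∃ x, x₁ < x ∧ x < x₂ ∧ (p x ↔ q b)) (b : β) :
    Order.Cofinal (ColoredPartialIso p q a₀ a₁ b₀ b₁) where
  carrier := {f | ∃ a, (a, b) ∈ f.1.1}
  isCofinal f := by
    obtain ⟨a, hab, hpq⟩ := exists_across_of_isBot_of_isTop (f := f.1.1.image Prod.swap)
      (Finset.forall_mem_image.2 fun x hx => Finset.forall_mem_image.2 fun y hy =>
        (f.1.2 x hx y hy).symm)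
      (Finset.forall_mem_image.2 fun x hx => (f.2.2.2 x hx).symm) hb₀ hb₁
      (Finset.mem_image_of_mem _ f.2.1) (Finset.mem_image_of_mem _ f.2.2.1)
      fun x₁ x₂ hx => (hp b x₁ x₂ hx).imp fun _ hx => ⟨hx.1, hx.2.1, hx.2.2.symm⟩
    obtain ⟨g, hg, hfg⟩ := f.exists_ge_mem (a := a) (b := b)
      (fun x hx => (hab _ (Finset.mem_image_of_mem Prod.swap hx)).symm) hpq.symm
    exact ⟨g, ⟨a, hg⟩, hfg⟩

end ColoredPartialIso

theorem exists_orderIso_forall_iff_of_colorDense [Countable α] [Countable β] {a₀ a₁ : α}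
    {b₀ b₁ : β} (ha₀ : IsBot a₀) (ha₁ : IsTop a₁) (hb₀ : IsBot b₀) (hb₁ : IsTop b₁)
    (ha : a₀ < a₁) (hb : b₀ < b₁) (h₀ : p a₀ ↔ q b₀) (h₁ : p a₁ ↔ q b₁)
    (hq : ∀ a : α, ∀ y₁ y₂ : β, y₁ < y₂ → ∃ y, y₁ < y ∧ y < y₂ ∧ (p a ↔ q y))
    (hp : ∀ b : β, ∀ x₁ x₂ : α, x₁ < x₂ → ∃ x, x₁ < x ∧ x < x₂ ∧ (p x ↔ q b)) :
    ∃ e : α ≃o β, ∀ a, p a ↔ q (e a) := by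
  cases nonempty_encodable α
  cases nonempty_encodable β
  let definedAt : α ⊕ β → Order.Cofinal (ColoredPartialIso p q a₀ a₁ b₀ b₁) :=
    Sum.elim (ColoredPartialIso.definedAtLeft ha₀ ha₁ hq)
      (ColoredPartialIso.definedAtRight hb₀ hb₁ hp)
  let I := Order.idealOfCofinals (ColoredPartialIso.seed ha hb h₀ h₁) definedAt
  have hF (a : α) : ∃ b, ∃ f ∈ I, (a, b) ∈ f.1.1 :=
    let ⟨f, ⟨b, hb⟩, hf⟩ := Order.cofinal_meets_idealOfCofinals _ definedAt (.inl a)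
    ⟨b, f, hf, hb⟩
  have hG (b : β) : ∃ a, ∃ f ∈ I, (a, b) ∈ f.1.1 :=
    let ⟨f, ⟨a, ha⟩, hf⟩ := Order.cofinal_meets_idealOfCofinals _ definedAt (.inr b)
    ⟨a, f, hf, ha⟩
  choose F hF using hF
  choose G hG using hG
  refine ⟨OrderIso.ofCmpEqCmp F G fun a b => ?_, fun a => ?_⟩
  · obtain ⟨f, hf, hfa⟩ := hF a
    obtain ⟨g, hg, hgb⟩ := hG b
    obtain ⟨m, -, hfm, hgm⟩ := I.directed _ hf _ hg
    exact m.1.2 _ (hfm hfa) _ (hgm hgb)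
  · obtain ⟨f, -, hfa⟩ := hF a
    exact f.2.2.2 _ hfa

end BackAndForth

/-! ### Gaps and intervals of a closed set -/

section QStructure

variable {X S T : Set ℝ}

theorem subset_compl_of_mem_gapsOf (hS : S ∈ gapsOf X) : S ⊆ Xᶜ := by
  obtain ⟨x, -, rfl⟩ := hS
  exact connectedComponentIn_subset _ _

theorem subset_of_mem_intervalsOf (hS : S ∈ intervalsOf X) : S ⊆ X := by
  obtain ⟨⟨x, -, rfl⟩, -⟩ := hS
  exact connectedComponentIn_subset _ _

theorem eq_connectedComponentIn_of_mem_gapsOf (hS : S ∈ gapsOf X) {x : ℝ} (hx : x ∈ S) :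
    S = connectedComponentIn Xᶜ x := by
  obtain ⟨y, -, rfl⟩ := hS
  exact connectedComponentIn_eq hx

theorem eq_connectedComponentIn_of_mem_intervalsOf (hS : S ∈ intervalsOf X) {x : ℝ}
    (hx : x ∈ S) : S = connectedComponentIn X x := by
  obtain ⟨⟨y, -, rfl⟩, -⟩ := hS
  exact connectedComponentIn_eq hx

theorem notMem_gapsOf_of_mem_intervalsOf (hS : S ∈ intervalsOf X) : S ∉ gapsOf X := fun hG =>
  let ⟨_, hx⟩ := hS.2.nonempty
  subset_compl_of_mem_gapsOf hG hx (subset_of_mem_intervalsOf hS hx)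

theorem isOpen_of_mem_gapsOf (hX : IsClosed X) (hS : S ∈ gapsOf X) : IsOpen S := by
  obtain ⟨x, -, rfl⟩ := hS
  exact hX.isOpen_compl.connectedComponentIn

theorem nonempty_of_mem_QOf (hS : S ∈ QOf X) : S.Nonempty := by
  rcases hS with ⟨x, hx, rfl⟩ | ⟨-, hS⟩
  · exact ⟨x, mem_connectedComponentIn hx⟩
  · exact hS.nonempty

theorem ordConnected_of_mem_QOf (hS : S ∈ QOf X) : S.OrdConnected := by
  rcases hS with ⟨x, -, rfl⟩ | ⟨⟨x, -, rfl⟩, -⟩ <;>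
    exact isPreconnected_connectedComponentIn.ordConnected

theorem nontrivial_of_mem_QOf (hX : IsClosed X) (hS : S ∈ QOf X) : S.Nontrivial := by
  rcases hS with hS | hS
  · obtain ⟨x, hx⟩ := nonempty_of_mem_QOf (Or.inl hS)
    obtain ⟨l, u, hlu, hsub⟩ := mem_nhds_iff_exists_Ioo_subset.1
      ((isOpen_of_mem_gapsOf hX hS).mem_nhds hx)
    obtain ⟨y, hxy, hyu⟩ := exists_between hlu.2
    exact ⟨x, hx, y, hsub ⟨hlu.1.trans hxy, hyu⟩, hxy.ne⟩
  · exact hS.2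

theorem eq_of_mem_QOf (hS : S ∈ QOf X) (hT : T ∈ QOf X) {x : ℝ} (hxS : x ∈ S) (hxT : x ∈ T) :
    S = T := by
  rcases hS with hS | hS <;> rcases hT with hT | hT
  · rw [eq_connectedComponentIn_of_mem_gapsOf hS hxS, eq_connectedComponentIn_of_mem_gapsOf hT hxT]
  · exact absurd (subset_of_mem_intervalsOf hT hxT) (subset_compl_of_mem_gapsOf hS hxS)
  · exact absurd (subset_of_mem_intervalsOf hS hxS) (subset_compl_of_mem_gapsOf hT hxT)
  · rw [eq_connectedComponentIn_of_mem_intervalsOf hS hxS,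
      eq_connectedComponentIn_of_mem_intervalsOf hT hxT]

theorem disjoint_of_mem_QOf (hS : S ∈ QOf X) (hT : T ∈ QOf X) (hST : S ≠ T) : Disjoint S T :=
  Set.disjoint_left.2 fun _ hxS hxT => hST (eq_of_mem_QOf hS hT hxS hxT)

theorem countable_QOf (hX : IsClosed X) : (QOf X).Countable :=
  Set.PairwiseDisjoint.countable_of_nonempty_interior (s := id)
    (fun _ hS _ hT => disjoint_of_mem_QOf hS hT)
    fun _ hS => (ordConnected_of_mem_QOf hS).interior_nonempty_of_nontrivial
      (nontrivial_of_mem_QOf hX hS)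

theorem Iio_csInf_mem_gapsOf (hX : IsCompact X) (hne : X.Nonempty) : Iio (sInf X) ∈ gapsOf X := by
  have hlt : sInf X - 1 < sInf X := by linarith
  refine ⟨sInf X - 1, fun h => hlt.not_ge (csInf_le hX.bddBelow h), ?_⟩
  refine (isPreconnected_Iio.subset_connectedComponentIn hlt
    (fun y hy hyX => (mem_Iio.1 hy).not_ge (csInf_le hX.bddBelow hyX))).antisymm ?_
  exact connectedComponentIn_subset_Iio hlt fun h => h (hX.sInf_mem hne)

theorem Ioi_csSup_mem_gapsOf (hX : IsCompact X) (hne : X.Nonempty) : Ioi (sSup X) ∈ gapsOf X := by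
  have hlt : sSup X < sSup X + 1 := by linarith
  refine ⟨sSup X + 1, fun h => hlt.not_ge (le_csSup hX.bddAbove h), ?_⟩
  refine (isPreconnected_Ioi.subset_connectedComponentIn hlt
    (fun y hy hyX => (mem_Ioi.1 hy).not_ge (le_csSup hX.bddAbove hyX))).antisymm ?_
  exact connectedComponentIn_subset_Ioi hlt fun h => h (hX.sSup_mem hne)

end QStructure

/-- `QOf X` as a type, to be ordered from left to right: the subtype of `Set ℝ` would inherit
`⊆` as its order. -/
def Piece (X : Set ℝ) : Type := {S : Set ℝ // S ∈ QOf X}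

namespace Piece

variable {X : Set ℝ}

/-- Distinct pieces are disjoint intervals, so comparing a chosen point of each orders them from
left to right. -/
noncomputable instance : LinearOrder (Piece X) :=
  LinearOrder.lift' (fun S => (nonempty_of_mem_QOf S.2).some) fun S T h => by
    have hST : (nonempty_of_mem_QOf S.2).some = (nonempty_of_mem_QOf T.2).some := h
    exact Subtype.ext (eq_of_mem_QOf S.2 T.2 (nonempty_of_mem_QOf S.2).some_mem
      (hST ▸ (nonempty_of_mem_QOf T.2).some_mem))

theorem countable (hX : IsClosed X) : Countable (Piece X) :=
  (countable_QOf hX).to_subtype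

theorem eq_of_mem {S T : Piece X} {x : ℝ} (hxS : x ∈ S.1) (hxT : x ∈ T.1) : S = T :=
  Subtype.ext (eq_of_mem_QOf S.2 T.2 hxS hxT)

theorem lt_iff_setLT {S T : Piece X} : S < T ↔ setLT S.1 T.1 := by
  refine ⟨fun h => ?_, fun h => h _ (nonempty_of_mem_QOf S.2).some_mem _
    (nonempty_of_mem_QOf T.2).some_mem⟩
  exact setLT_of_mem_of_lt (ordConnected_of_mem_QOf S.2) (ordConnected_of_mem_QOf T.2)
    (disjoint_of_mem_QOf S.2 T.2 fun h' => h.ne (Subtype.ext h'))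
    (nonempty_of_mem_QOf S.2).some_mem (nonempty_of_mem_QOf T.2).some_mem h

theorem lt_of_mem {S T : Piece X} {s t : ℝ} (hs : s ∈ S.1) (ht : t ∈ T.1) (hst : s < t)
    (hne : S ≠ T) : S < T :=
  lt_iff_setLT.2 <| setLT_of_mem_of_lt (ordConnected_of_mem_QOf S.2) (ordConnected_of_mem_QOf T.2)
    (disjoint_of_mem_QOf S.2 T.2 fun h => hne (Subtype.ext h)) hs ht hst

section BotTop

variable (hX : IsCompact X) (hne : X.Nonempty)

def bot : Piece X := ⟨Iio (sInf X), Or.inl (Iio_csInf_mem_gapsOf hX hne)⟩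

def top : Piece X := ⟨Ioi (sSup X), Or.inl (Ioi_csSup_mem_gapsOf hX hne)⟩

theorem isBot_bot : IsBot (bot hX hne) := fun S => by
  rcases eq_or_ne (bot hX hne) S with h | h
  · exact h.le
  obtain ⟨s, hs⟩ := nonempty_of_mem_QOf S.2
  have hs' : sInf X ≤ s :=
    not_lt.1 fun hlt => h (eq_of_mem (show s ∈ Iio (sInf X) from hlt) hs)
  exact (lt_of_mem (show sInf X - 1 ∈ Iio (sInf X) by simp) hs (by linarith) h).le

theorem isTop_top : IsTop (top hX hne) := fun S => by
  rcases eq_or_ne S (top hX hne) with h | h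
  · exact h.le
  obtain ⟨s, hs⟩ := nonempty_of_mem_QOf S.2
  have hs' : s ≤ sSup X :=
    not_lt.1 fun hlt => h (eq_of_mem hs (show s ∈ Ioi (sSup X) from hlt))
  exact (lt_of_mem hs (show sSup X + 1 ∈ Ioi (sSup X) by simp) (by linarith) h).le

theorem bot_lt_top : bot hX hne < top hX hne :=
  lt_iff_setLT.2 fun _ hx _ hy =>
    (mem_Iio.1 hx).trans ((csInf_le_csSup hne hX.bddBelow hX.bddAbove).trans_lt (mem_Ioi.1 hy))

variable {hX hne}

theorem exists_interior_eq_Ioo {S : Piece X} (hb : S ≠ bot hX hne) (ht : S ≠ top hX hne) :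
    ∃ a b, a < b ∧ interior S.1 = Ioo a b := by
  have hbot := lt_iff_setLT.1 ((isBot_bot hX hne S).lt_of_ne hb.symm)
  have htop := lt_iff_setLT.1 ((isTop_top hX hne S).lt_of_ne ht)
  have h := (ordConnected_of_mem_QOf S.2).interior_eq_Ioo
    ⟨sInf X - 1, fun s hs => (hbot _ (show sInf X - 1 < sInf X by linarith) s hs).le⟩
    ⟨sSup X + 1, fun s hs => (htop s hs _ (show sSup X < sSup X + 1 by linarith)).le⟩
  exact ⟨_, _, nonempty_Ioo.1 (h ▸ (ordConnected_of_mem_QOf S.2).interior_nonempty_of_nontrivial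
    (nontrivial_of_mem_QOf hX.isClosed S.2)), h⟩

end BotTop

end Piece

section EndpointsAccumulate

variable {X S : Set ℝ}

/-- The property shared by M-Cantorvals and Cantor sets that makes the gaps dense among the
pieces. -/
def EndpointsAccumulate (X : Set ℝ) : Prop :=
  ∀ x ∈ X, (IsLeast (connectedComponentIn X x) x ∨ IsGreatest (connectedComponentIn X x) x) →
    x ∈ closure (X \ connectedComponentIn X x)

theorem mem_of_mem_closure_of_mem_intervalsOf (hS : S ∈ intervalsOf X) {w : ℝ} (hw : w ∈ X)
    (hwS : w ∈ closure S) : w ∈ S := by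
  obtain ⟨⟨y, -, rfl⟩, -⟩ := hS
  exact mem_connectedComponentIn_of_mem_closure hw hwS

theorem csSup_mem_of_mem_QOf (hX : IsClosed X) (hS : S ∈ QOf X) (hbdd : BddAbove S) :
    sSup S ∈ X := by
  have hcl := csSup_mem_closure (nonempty_of_mem_QOf hS) hbdd
  rcases hS with hS | hS
  · by_contra hw
    refine csSup_notMem_of_isOpen (isOpen_of_mem_gapsOf hX hS) hbdd ?_
    obtain ⟨x, -, rfl⟩ := hS
    exact mem_connectedComponentIn_of_mem_closure hw hcl
  · exact hX.closure_subset_iff.2 (subset_of_mem_intervalsOf hS) hcl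

theorem inter_subset_connectedComponentIn_of_mem_closure (hS : S ∈ QOf X) {w : ℝ} (hw : w ∈ X)
    (hwS : w ∈ closure S) : S ∩ X ⊆ connectedComponentIn X w := by
  rcases hS with hS | hS
  · rintro x ⟨hxS, hxX⟩
    exact absurd hxX (subset_compl_of_mem_gapsOf hS hxS)
  · rw [← eq_connectedComponentIn_of_mem_intervalsOf hS
      (mem_of_mem_closure_of_mem_intervalsOf hS hw hwS)]
    exact inter_subset_left

theorem isLeast_or_isGreatest_connectedComponentIn_csSup (hX : IsClosed X) (hS : S ∈ QOf X)
    (hbdd : BddAbove S) :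
    IsLeast (connectedComponentIn X (sSup S)) (sSup S) ∨
      IsGreatest (connectedComponentIn X (sSup S)) (sSup S) := by
  have hwX := csSup_mem_of_mem_QOf hX hS hbdd
  have hcl := csSup_mem_closure (nonempty_of_mem_QOf hS) hbdd
  rcases hS with hS | hS
  · refine Or.inl ⟨mem_connectedComponentIn hwX, fun c hc => ?_⟩
    by_contra! hcw
    obtain ⟨a, haw, hsub⟩ := (ordConnected_of_mem_QOf (Or.inl hS)).exists_Ioo_csSup_subset
      (nontrivial_of_mem_QOf hX (Or.inl hS)) hbdd
    obtain ⟨x, hx, hxw⟩ := exists_between (max_lt haw hcw)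
    have hxC : x ∈ connectedComponentIn X (sSup S) :=
      isPreconnected_connectedComponentIn.ordConnected.out hc (mem_connectedComponentIn hwX)
        ⟨(le_max_right _ _).trans hx.le, hxw.le⟩
    exact subset_compl_of_mem_gapsOf hS (hsub ⟨(le_max_left _ _).trans_lt hx, hxw⟩)
      (connectedComponentIn_subset _ _ hxC)
  · have hwS := mem_of_mem_closure_of_mem_intervalsOf hS hwX hcl
    rw [← eq_connectedComponentIn_of_mem_intervalsOf hS hwS]
    exact Or.inr ⟨hwS, fun s hs => le_csSup hbdd hs⟩

theorem exists_mem_Ioo_csSup_notMem_connectedComponentIn (hX : IsClosed X)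
    (hP : EndpointsAccumulate X) (hS : S ∈ QOf X) (hbdd : BddAbove S) {b : ℝ} (hb : sSup S < b) :
    ∃ x ∈ X ∩ Ioo (sSup S) b, x ∉ connectedComponentIn X (sSup S) := by
  by_contra! h
  have hwX := csSup_mem_of_mem_QOf hX hS hbdd
  obtain ⟨a, haw, hsub⟩ := (ordConnected_of_mem_QOf hS).exists_Ioo_csSup_subset
    (nontrivial_of_mem_QOf hX hS) hbdd
  have hnhds : X ∩ Ioo a b ⊆ connectedComponentIn X (sSup S) := by
    rintro x ⟨hxX, hax, hxb⟩
    rcases lt_trichotomy x (sSup S) with hxw | hxw | hwx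
    · exact inter_subset_connectedComponentIn_of_mem_closure hS hwX
        (csSup_mem_closure (nonempty_of_mem_QOf hS) hbdd) ⟨hsub ⟨hax, hxw⟩, hxX⟩
    · rw [hxw]; exact mem_connectedComponentIn hwX
    · exact h x ⟨hxX, hwx, hxb⟩
  obtain ⟨x, hx, hxX, hxC⟩ := mem_closure_iff_nhds.1
    (hP _ hwX (isLeast_or_isGreatest_connectedComponentIn_csSup hX hS hbdd)) _
    (Ioo_mem_nhds haw hb)
  exact hxC (hnhds ⟨hxX, hx⟩)

end EndpointsAccumulate

namespace Piece

variable {X : Set ℝ} {S T : Piece X}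

theorem bddAbove_of_lt (h : S < T) : BddAbove S.1 :=
  let ⟨t, ht⟩ := nonempty_of_mem_QOf T.2
  ⟨t, fun _ hs => (lt_iff_setLT.1 h _ hs t ht).le⟩

theorem bddBelow_of_lt (h : S < T) : BddBelow T.1 :=
  let ⟨s, hs⟩ := nonempty_of_mem_QOf S.2
  ⟨s, fun _ ht => (lt_iff_setLT.1 h s hs _ ht).le⟩

variable (hX : IsClosed X) (hP : EndpointsAccumulate X)
include hX hP

theorem csSup_lt_csInf (h : S < T) : sSup S.1 < sInf T.1 := by
  have hle : sSup S.1 ≤ sInf T.1 := csSup_le (nonempty_of_mem_QOf S.2) fun _ hs =>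
    le_csInf (nonempty_of_mem_QOf T.2) fun _ ht => (lt_iff_setLT.1 h _ hs _ ht).le
  refine hle.lt_of_ne fun heq => ?_
  obtain ⟨b, hb, hsub⟩ := (ordConnected_of_mem_QOf T.2).exists_Ioo_csInf_subset
    (nontrivial_of_mem_QOf hX T.2) (bddBelow_of_lt h)
  rw [← heq] at hb hsub
  obtain ⟨x, ⟨hxX, hx⟩, hxC⟩ :=
    exists_mem_Ioo_csSup_notMem_connectedComponentIn hX hP S.2 (bddAbove_of_lt h) hb
  have hwT : sSup S.1 ∈ closure T.1 :=
    heq ▸ csInf_mem_closure (nonempty_of_mem_QOf T.2) (bddBelow_of_lt h)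
  exact hxC (inter_subset_connectedComponentIn_of_mem_closure T.2
    (csSup_mem_of_mem_QOf hX S.2 (bddAbove_of_lt h)) hwT ⟨hsub hx, hxX⟩)

theorem exists_gap_between (h : S < T) : ∃ G : Piece X, S < G ∧ G < T ∧ G.1 ∈ gapsOf X := by
  have huv := csSup_lt_csInf hX hP h
  have huX := csSup_mem_of_mem_QOf hX S.2 (bddAbove_of_lt h)
  obtain ⟨z, hz, hzX⟩ : ∃ z ∈ Ioo (sSup S.1) (sInf T.1), z ∉ X := by
    by_contra! hsub
    obtain ⟨x, ⟨-, hx⟩, hxC⟩ :=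
      exists_mem_Ioo_csSup_notMem_connectedComponentIn hX hP S.2 (bddAbove_of_lt h) huv
    refine hxC (isPreconnected_Ico.subset_connectedComponentIn (left_mem_Ico.2 huv)
      (fun y hy => ?_) (Ioo_subset_Ico_self hx))
    rcases hy.1.eq_or_lt with rfl | hy₁
    · exact huX
    · exact hsub y ⟨hy₁, hy.2⟩
  let G : Piece X := ⟨connectedComponentIn Xᶜ z, Or.inl ⟨z, hzX, rfl⟩⟩
  have hzG : z ∈ G.1 := mem_connectedComponentIn hzX
  obtain ⟨s, hs⟩ := nonempty_of_mem_QOf S.2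
  obtain ⟨t, ht⟩ := nonempty_of_mem_QOf T.2
  refine ⟨G, lt_of_mem hs hzG ((le_csSup (bddAbove_of_lt h) hs).trans_lt hz.1) ?_,
    lt_of_mem hzG ht (hz.2.trans_le (csInf_le (bddBelow_of_lt h) ht)) ?_, ⟨z, hzX, rfl⟩⟩
  · exact fun hSG => (le_csSup (bddAbove_of_lt h) (hSG ▸ hzG)).not_gt hz.1
  · exact fun hGT => (csInf_le (bddBelow_of_lt h) (hGT ▸ hzG)).not_gt hz.2

/-- An interval is found just right of a gap lying between `S` and `T`: the right end of the gap
is a point of `X`, hence a limit of intervals. -/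
theorem exists_interval_between (hR : X ⊆ closure (⋃₀ intervalsOf X)) (h : S < T) :
    ∃ I : Piece X, S < I ∧ I < T ∧ I.1 ∈ intervalsOf X := by
  obtain ⟨G, hSG, hGT, hG⟩ := exists_gap_between hX hP h
  have hgv := csSup_lt_csInf hX hP hGT
  obtain ⟨a, hag, hsub⟩ := (ordConnected_of_mem_QOf G.2).exists_Ioo_csSup_subset
    (nontrivial_of_mem_QOf hX G.2) (bddAbove_of_lt hGT)
  obtain ⟨p, hp, I, hI, hpI⟩ := mem_closure_iff_nhds.1
    (hR (csSup_mem_of_mem_QOf hX G.2 (bddAbove_of_lt hGT))) _ (Ioo_mem_nhds hag hgv)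
  have hpX := subset_of_mem_intervalsOf hI hpI
  have hgp : sSup G.1 ≤ p :=
    not_lt.1 fun hpg => subset_compl_of_mem_gapsOf hG (hsub ⟨hp.1, hpg⟩) hpX
  let J : Piece X := ⟨I, Or.inr hI⟩
  obtain ⟨x, hx⟩ := exists_between hag
  obtain ⟨t, ht⟩ := nonempty_of_mem_QOf T.2
  have hGJ : G < J := lt_of_mem (hsub hx) hpI (hx.2.trans_le hgp)
    fun hGJ => subset_compl_of_mem_gapsOf hG (hGJ ▸ hpI : p ∈ G.1) hpX
  have hJT : J < T := lt_of_mem hpI ht (hp.2.trans_le (csInf_le (bddBelow_of_lt hGT) ht))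
    fun hJT => (csInf_le (bddBelow_of_lt hGT) (hJT ▸ hpI : p ∈ T.1)).not_gt hp.2
  exact ⟨J, hSG.trans hGJ, hJT, hI⟩

theorem exists_between_iff_mem_gapsOf (hR : X ⊆ closure (⋃₀ intervalsOf X)) (c : Prop)
    (h : S < T) : ∃ U, S < U ∧ U < T ∧ (U.1 ∈ gapsOf X ↔ c) := by
  by_cases hc : c
  · obtain ⟨G, hSG, hGT, hG⟩ := exists_gap_between hX hP h
    exact ⟨G, hSG, hGT, iff_of_true hG hc⟩
  · obtain ⟨I, hSI, hIT, hI⟩ := exists_interval_between hX hP hR h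
    exact ⟨I, hSI, hIT, iff_of_false (notMem_gapsOf_of_mem_intervalsOf hI) hc⟩

end Piece

theorem MCantorval.endpointsAccumulate {X : Set ℝ} (hX : MCantorval X) :
    EndpointsAccumulate X := by
  intro x hx hend
  by_cases hC : (connectedComponentIn X x).Nontrivial
  · refine closure_mono ?_ (hX.2.2.2 _ ⟨⟨x, hx, rfl⟩, hC⟩ x hend)
    rintro t ⟨⟨htX, ht⟩, htx⟩
    refine ⟨htX, fun htC => htx ?_⟩
    rw [connectedComponentIn_eq htC, ht] at hC
    exact absurd hC not_nontrivial_singleton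
  · rw [(not_nontrivial_iff.1 hC).eq_singleton_of_mem (mem_connectedComponentIn hx)]
    refine closure_mono ?_ (hX.2.2.1.2 hx)
    rintro y ⟨I, hI, hyI⟩
    refine ⟨subset_of_mem_intervalsOf hI hyI, fun hyx => hC ?_⟩
    obtain rfl := mem_singleton_iff.1 hyx
    exact eq_connectedComponentIn_of_mem_intervalsOf hI hyI ▸ hI.2

section TotallyDisconnected

variable {X : Set ℝ} (hT : IsTotallyDisconnected X)
include hT

theorem IsTotallyDisconnected.connectedComponentIn_eq_singleton {x : ℝ} (hx : x ∈ X) :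
    connectedComponentIn X x = {x} :=
  (hT _ (connectedComponentIn_subset X x) isPreconnected_connectedComponentIn).eq_singleton_of_mem
    (mem_connectedComponentIn hx)

theorem IsTotallyDisconnected.intervalsOf_eq_empty : intervalsOf X = ∅ :=
  eq_empty_of_forall_notMem fun _ hS => hS.2.not_subsingleton
    (hT _ (subset_of_mem_intervalsOf hS) (ordConnected_of_mem_QOf (Or.inr hS)).isPreconnected)

theorem IsTotallyDisconnected.endpointsAccumulate (hperf : ∀ x ∈ X, x ∈ closure (X \ {x})) :
    EndpointsAccumulate X := fun x hx _ =>
  hT.connectedComponentIn_eq_singleton hx ▸ hperf x hx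

end TotallyDisconnected

/-! ### Gluing charts along the pieces -/

theorem Piece.dense_iUnion_interior {X : Set ℝ} (hX : IsClosed X) :
    Dense (⋃ S : Piece X, interior S.1) := by
  refine dense_iff_inter_open.2 fun U hU ⟨x, hx⟩ => ?_
  by_cases hUX : U ⊆ X
  · obtain ⟨l, u, hxlu, hsub⟩ := mem_nhds_iff_exists_Ioo_subset.1 (hU.mem_nhds hx)
    have hC : Ioo l u ⊆ connectedComponentIn X x :=
      isPreconnected_Ioo.subset_connectedComponentIn hxlu (hsub.trans hUX)
    obtain ⟨y, hxy, hyu⟩ := exists_between hxlu.2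
    let S : Piece X := ⟨_, Or.inr ⟨⟨x, hUX hx, rfl⟩,
      ⟨x, hC hxlu, y, hC ⟨hxlu.1.trans hxy, hyu⟩, hxy.ne⟩⟩⟩
    exact ⟨x, hx, mem_iUnion.2 ⟨S, interior_maximal hC isOpen_Ioo hxlu⟩⟩
  · obtain ⟨y, hyU, hyX⟩ := not_subset.1 hUX
    let G : Piece X := ⟨_, Or.inl ⟨y, hyX, rfl⟩⟩
    refine ⟨y, hyU, mem_iUnion.2 ⟨G, ?_⟩⟩
    rw [(isOpen_of_mem_gapsOf hX ⟨y, hyX, rfl⟩).interior_eq]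
    exact mem_connectedComponentIn hyX

namespace Piece

variable {X Y : Set ℝ}

open scoped Classical in
noncomputable def glue (φ : Piece X → ℝ ≃o ℝ) (x : ℝ) : ℝ :=
  if h : ∃ S : Piece X, x ∈ interior S.1 then φ h.choose x else x

theorem glue_eq (φ : Piece X → ℝ ≃o ℝ) {S : Piece X} {x : ℝ} (hx : x ∈ interior S.1) :
    glue φ x = φ S x := by
  have h : ∃ S : Piece X, x ∈ interior S.1 := ⟨S, hx⟩
  rw [glue, dif_pos h, eq_of_mem (interior_subset h.choose_spec) (interior_subset hx)]

variable (e : Piece X ≃o Piece Y) {φ : Piece X → ℝ ≃o ℝ}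
  (hφ : ∀ S, φ S '' interior S.1 = interior (e S).1)
include hφ

theorem strictMonoOn_glue : StrictMonoOn (glue φ) (⋃ S : Piece X, interior S.1) := by
  intro x hx y hy hxy
  obtain ⟨S, hxS⟩ := mem_iUnion.1 hx
  obtain ⟨T, hyT⟩ := mem_iUnion.1 hy
  rw [glue_eq φ hxS, glue_eq φ hyT]
  rcases eq_or_ne S T with rfl | hST
  · exact (φ S).strictMono hxy
  · exact lt_iff_setLT.1
      (e.strictMono (lt_of_mem (interior_subset hxS) (interior_subset hyT) hxy hST))
      _ (interior_subset (hφ S ▸ mem_image_of_mem _ hxS))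
      _ (interior_subset (hφ T ▸ mem_image_of_mem _ hyT))

theorem image_glue_interior (S : Piece X) : glue φ '' interior S.1 = interior (e S).1 := by
  rw [← hφ S]
  exact EqOn.image_eq fun _ hx => glue_eq φ hx

theorem image_glue : glue φ '' (⋃ S : Piece X, interior S.1) = ⋃ T : Piece Y, interior T.1 := by
  simp_rw [image_iUnion, image_glue_interior e hφ]
  exact e.surjective.iUnion_comp fun T => interior T.1

end Piece

section Gluing

variable {X Y : Set ℝ} (hX : IsCompact X) (hXne : X.Nonempty) (hY : IsCompact Y)
  (hYne : Y.Nonempty)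
include hX hXne hY hYne

theorem Piece.exists_orderIso_image_interior (e : Piece X ≃o Piece Y) (S : Piece X) :
    ∃ φ : ℝ ≃o ℝ, φ '' interior S.1 = interior (e S).1 := by
  have hbot : e (Piece.bot hX hXne) = Piece.bot hY hYne :=
    e.map_bot' (Piece.isBot_bot hX hXne) (Piece.isBot_bot hY hYne)
  have htop : e (Piece.top hX hXne) = Piece.top hY hYne :=
    e.map_top' (Piece.isTop_top hX hXne) (Piece.isTop_top hY hYne)
  by_cases hb : S = Piece.bot hX hXne
  · rw [hb, hbot]
    simpa only [Piece.bot, interior_Iio] using exists_orderIso_image_Iio _ _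
  by_cases ht : S = Piece.top hX hXne
  · rw [ht, htop]
    simpa only [Piece.top, interior_Ioi] using exists_orderIso_image_Ioi _ _
  obtain ⟨a, b, hab, hS⟩ := Piece.exists_interior_eq_Ioo hb ht
  obtain ⟨c, d, hcd, heS⟩ := Piece.exists_interior_eq_Ioo (hX := hY) (hne := hYne)
    (hbot ▸ e.injective.ne hb) (htop ▸ e.injective.ne ht)
  rw [hS, heS]
  exact exists_orderIso_image_Ioo hab hcd

/-- Glue order isomorphisms between the interiors of corresponding pieces and extend by
density; the result maps each gap of `X` onto the corresponding gap of `Y`. -/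
theorem exists_orderIso_image_eq_of_orderIso_piece (e : Piece X ≃o Piece Y)
    (he : ∀ S, S.1 ∈ gapsOf X ↔ (e S).1 ∈ gapsOf Y) : ∃ Φ : ℝ ≃o ℝ, Φ '' X = Y := by
  choose φ hφ using Piece.exists_orderIso_image_interior hX hXne hY hYne e
  obtain ⟨Φ, hΦ⟩ := exists_orderIso_eqOn_of_dense (Piece.dense_iUnion_interior hX.isClosed)
    (Piece.dense_iUnion_interior hY.isClosed) (Piece.strictMonoOn_glue e hφ)
    (Piece.image_glue e hφ)
  have himage (S : Piece X) (hS : S.1 ∈ gapsOf X) : Φ '' S.1 = (e S).1 := by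
    rw [← (isOpen_of_mem_gapsOf hX.isClosed hS).interior_eq,
      ← (isOpen_of_mem_gapsOf hY.isClosed ((he S).1 hS)).interior_eq,
      ← Piece.image_glue_interior e hφ S]
    exact EqOn.image_eq fun x hx => hΦ (mem_iUnion.2 ⟨S, hx⟩)
  refine ⟨Φ, ?_⟩
  rw [← compl_inj_iff, ← image_compl_eq Φ.bijective]
  ext y
  constructor
  · rintro ⟨x, hx, rfl⟩
    have hS : connectedComponentIn Xᶜ x ∈ gapsOf X := ⟨x, hx, rfl⟩
    exact subset_compl_of_mem_gapsOf ((he ⟨_, Or.inl hS⟩).1 hS)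
      (himage ⟨_, Or.inl hS⟩ hS ▸ mem_image_of_mem Φ (mem_connectedComponentIn hx))
  · intro hy
    let T : Piece Y := ⟨_, Or.inl ⟨y, hy, rfl⟩⟩
    have hS : (e.symm T).1 ∈ gapsOf X := (he _).2 (by rw [e.apply_symm_apply]; exact ⟨y, hy, rfl⟩)
    have hT : Φ '' (e.symm T).1 = T.1 := by rw [himage _ hS, e.apply_symm_apply]
    have hyT : y ∈ Φ '' (e.symm T).1 := hT ▸ mem_connectedComponentIn hy
    obtain ⟨x, hx, rfl⟩ := hyT
    exact mem_image_of_mem Φ (subset_compl_of_mem_gapsOf hS hx)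

theorem exists_orderIso_image_eq_of_colorDense
    (hXY : ∀ (S : Piece X) (T₁ T₂ : Piece Y), T₁ < T₂ →
      ∃ T, T₁ < T ∧ T < T₂ ∧ (S.1 ∈ gapsOf X ↔ T.1 ∈ gapsOf Y))
    (hYX : ∀ (T : Piece Y) (S₁ S₂ : Piece X), S₁ < S₂ →
      ∃ S, S₁ < S ∧ S < S₂ ∧ (S.1 ∈ gapsOf X ↔ T.1 ∈ gapsOf Y)) :
    ∃ Φ : ℝ ≃o ℝ, Φ '' X = Y := by
  have := Piece.countable hX.isClosed
  have := Piece.countable hY.isClosed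
  obtain ⟨e, he⟩ := exists_orderIso_forall_iff_of_colorDense
    (p := fun S : Piece X => S.1 ∈ gapsOf X) (q := fun T : Piece Y => T.1 ∈ gapsOf Y)
    (Piece.isBot_bot hX hXne) (Piece.isTop_top hX hXne)
    (Piece.isBot_bot hY hYne) (Piece.isTop_top hY hYne) (Piece.bot_lt_top hX hXne)
    (Piece.bot_lt_top hY hYne)
    (iff_of_true (Iio_csInf_mem_gapsOf hX hXne) (Iio_csInf_mem_gapsOf hY hYne))
    (iff_of_true (Ioi_csSup_mem_gapsOf hX hXne) (Ioi_csSup_mem_gapsOf hY hYne)) hXY hYX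
  exact exists_orderIso_image_eq_of_orderIso_piece hX hXne hY hYne e he

theorem exists_orderIso_image_eq_of_subset_closure (hPX : EndpointsAccumulate X)
    (hRX : X ⊆ closure (⋃₀ intervalsOf X)) (hPY : EndpointsAccumulate Y)
    (hRY : Y ⊆ closure (⋃₀ intervalsOf Y)) : ∃ Φ : ℝ ≃o ℝ, Φ '' X = Y :=
  exists_orderIso_image_eq_of_colorDense hX hXne hY hYne
    (fun _ _ _ h => (Piece.exists_between_iff_mem_gapsOf hY.isClosed hPY hRY _ h).imp
      fun _ hT => ⟨hT.1, hT.2.1, hT.2.2.symm⟩)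
    (fun _ _ _ h => Piece.exists_between_iff_mem_gapsOf hX.isClosed hPX hRX _ h)

theorem exists_orderIso_image_eq_of_isTotallyDisconnected (hTX : IsTotallyDisconnected X)
    (hPX : ∀ x ∈ X, x ∈ closure (X \ {x})) (hTY : IsTotallyDisconnected Y)
    (hPY : ∀ y ∈ Y, y ∈ closure (Y \ {y})) : ∃ Φ : ℝ ≃o ℝ, Φ '' X = Y := by
  have hgX (S : Piece X) : S.1 ∈ gapsOf X :=
    S.2.resolve_right (hTX.intervalsOf_eq_empty ▸ notMem_empty _)
  have hgY (T : Piece Y) : T.1 ∈ gapsOf Y :=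
    T.2.resolve_right (hTY.intervalsOf_eq_empty ▸ notMem_empty _)
  exact exists_orderIso_image_eq_of_colorDense hX hXne hY hYne
    (fun S _ _ h => (Piece.exists_gap_between hY.isClosed (hTY.endpointsAccumulate hPY) h).imp
      fun T hT => ⟨hT.1, hT.2.1, iff_of_true (hgX S) (hgY T)⟩)
    (fun T _ _ h => (Piece.exists_gap_between hX.isClosed (hTX.endpointsAccumulate hPX) h).imp
      fun S hS => ⟨hS.1, hS.2.1, iff_of_true (hgX S) (hgY T)⟩)

end Gluing

/-! ### Invariance under homeomorphisms -/

section Transfer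

variable {X Y : Set ℝ} {f g : ℝ → ℝ} (hf : ContinuousOn f X) (hg : ContinuousOn g Y)
  (hfXY : MapsTo f X Y) (hgYX : MapsTo g Y X) (hgf : InvOn g f X Y)
include hf hg hfXY hgYX hgf

theorem image_connectedComponentIn_of_invOn {x : ℝ} (hx : x ∈ X) :
    f '' connectedComponentIn X x = connectedComponentIn Y (f x) := by
  have hfX : f '' X = Y := (hgf.bijOn hfXY hgYX).image_eq
  have hgY : g '' Y = X := (hgf.symm.bijOn hgYX hfXY).image_eq
  refine (hfX ▸ hf.image_connectedComponentIn_subset hx).antisymm fun y hy => ?_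
  have hgy := hg.image_connectedComponentIn_subset (hfXY hx) (mem_image_of_mem g hy)
  rw [hgY, hgf.1 hx] at hgy
  exact ⟨g y, hgy, hgf.2 (connectedComponentIn_subset Y _ hy)⟩

theorem subset_closure_sUnion_intervalsOf_of_invOn (hR : X ⊆ closure (⋃₀ intervalsOf X)) :
    Y ⊆ closure (⋃₀ intervalsOf Y) := by
  intro y hy
  have hmaps : MapsTo f (⋃₀ intervalsOf X) (⋃₀ intervalsOf Y) := by
    rintro z ⟨I, hI, hzI⟩
    have hzX := subset_of_mem_intervalsOf hI hzI
    refine ⟨connectedComponentIn Y (f z), ⟨⟨f z, hfXY hzX, rfl⟩, ?_⟩,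
      mem_connectedComponentIn (hfXY hzX)⟩
    rw [← image_connectedComponentIn_of_invOn hf hg hfXY hgYX hgf hzX,
      ← eq_connectedComponentIn_of_mem_intervalsOf hI hzI]
    exact hI.2.image_of_injOn (hgf.1.injOn.mono (subset_of_mem_intervalsOf hI))
  have := ((hf _ (hgYX hy)).mono (sUnion_subset fun I hI => subset_of_mem_intervalsOf hI))
    |>.mem_closure (hR (hgYX hy)) hmaps
  rwa [hgf.2 hy] at this

theorem endpointsAccumulate_of_invOn (hP : EndpointsAccumulate X) : EndpointsAccumulate Y := by
  intro y hy hend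
  have hx : g y ∈ X := hgYX hy
  have hCx : g '' connectedComponentIn Y y = connectedComponentIn X (g y) :=
    image_connectedComponentIn_of_invOn hg hf hgYX hfXY hgf.symm hy
  have hCy : f '' connectedComponentIn X (g y) = connectedComponentIn Y y := by
    rw [image_connectedComponentIn_of_invOn hf hg hfXY hgYX hgf hx, hgf.2 hy]
  rw [isLeast_or_isGreatest_iff_isPreconnected_diff
    isPreconnected_connectedComponentIn.ordConnected (mem_connectedComponentIn hy)] at hend
  have hdiff : g '' (connectedComponentIn Y y \ {y}) = connectedComponentIn X (g y) \ {g y} := by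
    rw [(hgf.symm.1.injOn.mono (connectedComponentIn_subset _ _)).image_sdiff,
      inter_eq_right.2 (singleton_subset_iff.2 (mem_connectedComponentIn hy)), image_singleton, hCx]
  have hxend := (isLeast_or_isGreatest_iff_isPreconnected_diff
    isPreconnected_connectedComponentIn.ordConnected (mem_connectedComponentIn hx)).2
    (hdiff ▸ hend.image g (hg.mono (sdiff_subset.trans (connectedComponentIn_subset _ _))))
  have hmaps : MapsTo f (X \ connectedComponentIn X (g y)) (Y \ connectedComponentIn Y y) := by
    rintro z ⟨hzX, hzC⟩
    refine ⟨hfXY hzX, fun hfz => hzC ?_⟩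
    obtain ⟨c, hc, hcz⟩ := hCy ▸ hfz
    exact hgf.1.injOn (connectedComponentIn_subset _ _ hc) hzX hcz ▸ hc
  have := ((hf _ hx).mono sdiff_subset).mem_closure (hP _ hx hxend) hmaps
  rwa [hgf.2 hy] at this

end Transfer

theorem Homeomorph.exists_continuousOn_invOn {X Y : Set ℝ} (e : X ≃ₜ Y) :
    ∃ f g : ℝ → ℝ, ContinuousOn f X ∧ ContinuousOn g Y ∧ MapsTo f X Y ∧ MapsTo g Y X ∧
      InvOn g f X Y := by
  classical
  set f : ℝ → ℝ := fun x => if h : x ∈ X then e ⟨x, h⟩ else x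
  set g : ℝ → ℝ := fun y => if h : y ∈ Y then e.symm ⟨y, h⟩ else y
  have hf {x : ℝ} (hx : x ∈ X) : f x = e ⟨x, hx⟩ := dif_pos hx
  have hg {y : ℝ} (hy : y ∈ Y) : g y = e.symm ⟨y, hy⟩ := dif_pos hy
  refine ⟨f, g, ?_, ?_, fun x hx => hf hx ▸ (e _).2, fun y hy => hg hy ▸ (e.symm _).2,
    fun x hx => ?_, fun y hy => ?_⟩
  · rw [continuousOn_iff_continuous_domRestrict]
    exact (continuous_subtype_val.comp e.continuous).congr fun x => (hf x.2).symm
  · rw [continuousOn_iff_continuous_domRestrict]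
    exact (continuous_subtype_val.comp e.symm.continuous).congr fun y => (hg y.2).symm
  · simp [hf hx, hg (e ⟨x, hx⟩).2]
  · simp [hg hy, hf (e.symm ⟨y, hy⟩).2]

theorem MCantorval.isCompact {X : Set ℝ} (hX : MCantorval X) : IsCompact X :=
  Metric.isCompact_of_isClosed_isBounded hX.2.2.1.1 hX.2.1

theorem MCantorval.exists_orderIso_image_eq_of_homeomorph {X Y : Set ℝ} (hX : MCantorval X)
    (e : X ≃ₜ Y) : ∃ Φ : ℝ ≃o ℝ, Φ '' X = Y := by
  obtain ⟨f, g, hf, hg, hfXY, hgYX, hgf⟩ := e.exists_continuousOn_invOn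
  have hfX : f '' X = Y := (hgf.bijOn hfXY hgYX).image_eq
  exact exists_orderIso_image_eq_of_subset_closure hX.isCompact hX.1
    (hfX ▸ hX.isCompact.image_of_continuousOn hf) (hfX ▸ hX.1.image f) hX.endpointsAccumulate
    hX.2.2.1.2 (endpointsAccumulate_of_invOn hf hg hfXY hgYX hgf hX.endpointsAccumulate)
    (subset_closure_sUnion_intervalsOf_of_invOn hf hg hfXY hgYX hgf hX.2.2.1.2)

theorem mem_closure_diff_singleton_of_homeomorph_cantor {X : Set ℝ} (e : X ≃ₜ (ℕ → Bool))
    {x : ℝ} (hx : x ∈ X) : x ∈ closure (X \ {x}) := by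
  set p := e ⟨x, hx⟩
  have hflip : Tendsto (fun n => Function.update p n (!p n)) atTop (𝓝 p) :=
    tendsto_pi_nhds.2 fun i => tendsto_atTop_of_eventually_const (i₀ := i + 1) fun n hn =>
      Function.update_of_ne (by omega) _ _
  have hlim : Tendsto (fun n => (e.symm (Function.update p n (!p n)) : ℝ)) atTop (𝓝 x) := by
    have hx' : x = (e.symm p : ℝ) := by simp [p]
    rw [hx']
    exact ((continuous_subtype_val.comp e.symm.continuous).tendsto p).comp hflip
  refine mem_closure_of_tendsto hlim (Eventually.of_forall fun n => ⟨(e.symm _).2, fun h => ?_⟩)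
  have h' : e.symm (Function.update p n (!p n)) = ⟨x, hx⟩ := Subtype.ext h
  have := congrFun (e.symm_apply_eq.1 h') n
  simp [p] at this

theorem exists_orderIso_image_eq_of_homeomorph_cantor {X Y : Set ℝ} (eX : X ≃ₜ (ℕ → Bool))
    (eY : Y ≃ₜ (ℕ → Bool)) : ∃ Φ : ℝ ≃o ℝ, Φ '' X = Y :=
  exists_orderIso_image_eq_of_isTotallyDisconnected
    (isCompact_iff_compactSpace.2 eX.symm.compactSpace) ⟨_, (eX.symm fun _ => false).2⟩
    (isCompact_iff_compactSpace.2 eY.symm.compactSpace) ⟨_, (eY.symm fun _ => false).2⟩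
    (totallyDisconnectedSpace_subtype_iff.1 eX.symm.totallyDisconnectedSpace)
    (fun _ => mem_closure_diff_singleton_of_homeomorph_cantor eX)
    (totallyDisconnectedSpace_subtype_iff.1 eY.symm.totallyDisconnectedSpace)
    (fun _ => mem_closure_diff_singleton_of_homeomorph_cantor eY)

theorem mCantorvals_homeomorphic_and_tame :
    (∀ X Y : Set ℝ, MCantorval X → MCantorval Y →
      ∃ F : ℝ ≃ₜ ℝ, StrictMono F ∧ F '' X = Y) ∧
    (∀ X : Set ℝ, MCantorval X → IsTame X) ∧
    (∀ X : Set ℝ, Nonempty (↥X ≃ₜ (ℕ → Bool)) → IsTame X) := by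
  refine ⟨fun X Y hX hY => ?_, fun X hX Y ⟨e⟩ => ?_, fun X ⟨eX⟩ Y ⟨e⟩ => ?_⟩
  · obtain ⟨Φ, hΦ⟩ := exists_orderIso_image_eq_of_subset_closure hX.isCompact hX.1 hY.isCompact
      hY.1 hX.endpointsAccumulate hX.2.2.1.2 hY.endpointsAccumulate hY.2.2.1.2
    exact ⟨Φ.toHomeomorph, Φ.strictMono, hΦ⟩
  · obtain ⟨Φ, hΦ⟩ := hX.exists_orderIso_image_eq_of_homeomorph e
    exact ⟨Φ.toHomeomorph, hΦ⟩
  · obtain ⟨Φ, hΦ⟩ := exists_orderIso_image_eq_of_homeomorph_cantor eX (e.symm.trans eX)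
    exact ⟨Φ.toHomeomorph, hΦ⟩
end
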